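/- Let n ≥ 2, 1 ≤ d ≤ n, and let t be a positive multiple of d with t ≥ 2 * d * log₂ n + d² * log₂ (Real.exp 1 * n / d). Then the random design on n items with 2t tests and column-sparsity t/d is d-disjunct (i.e., D-distinguishing for every subset D ⊆ Fin n with |D| = d) with probability at least 1 − 1/n. -/

import Mathlib

/-!
The design fails to be `d`-disjunct only if some column `S j` is covered by the union of the
columns `S k`, `k ∈ D`, for some `d`-set `D ∌ j`. That union has at most `d s = t` elements, so
for a fixed pair `(D, j)` this happens with probability at most `C(t, s) / C(2t, s) ≤ 2⁻ˢ`. There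
are at most `n C(n, d) ≤ n (e n / d)ᵈ` pairs, and the hypothesis on `t` says exactly that
`n² (e n / d)ᵈ ≤ 2ˢ`; the union bound then gives failure probability at most `1 / n`.
-/

open Finset Real

namespace Nat

theorem pow_mul_descFactorial_le (k t s : ℕ) :
    k ^ s * t.descFactorial s ≤ (k * t).descFactorial s := by
  induction s with
  | zero => simp
  | succ s ih =>
    have hstep : k * (t - s) ≤ k * t - s := by
      rcases k with _ | k
      · simp
      · rw [Nat.mul_sub]
        exact Nat.sub_le_sub_left (Nat.le_mul_of_pos_left s k.succ_pos) _
    rw [descFactorial_succ, descFactorial_succ, pow_succ]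
    calc k ^ s * k * ((t - s) * t.descFactorial s)
        = k * (t - s) * (k ^ s * t.descFactorial s) := by ring
      _ ≤ (k * t - s) * (k * t).descFactorial s := Nat.mul_le_mul hstep ih

theorem pow_mul_choose_le (k t s : ℕ) : k ^ s * t.choose s ≤ (k * t).choose s := by
  rw [choose_eq_descFactorial_div_factorial, choose_eq_descFactorial_div_factorial,
    ← Nat.mul_div_assoc _ (factorial_dvd_descFactorial _ _)]
  exact Nat.div_le_div_right (pow_mul_descFactorial_le k t s)

theorem choose_le_exp_mul_div_pow (n d : ℕ) : (n.choose d : ℝ) ≤ (exp 1 * n / d) ^ d := by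
  rcases Nat.eq_zero_or_pos d with rfl | hd
  · simp
  have hfac : (d : ℝ) ^ d / d ! ≤ exp 1 ^ d := by
    rw [exp_one_pow]
    exact Real.pow_div_factorial_le_exp _ (Nat.cast_nonneg d) d
  calc (n.choose d : ℝ) ≤ (n : ℝ) ^ d / d ! := choose_le_pow_div d n
    _ = (n : ℝ) ^ d * ((d : ℝ) ^ d / d !) / (d : ℝ) ^ d := by field_simp
    _ ≤ (n : ℝ) ^ d * exp 1 ^ d / (d : ℝ) ^ d := by gcongr
    _ = (exp 1 * n / d) ^ d := by rw [div_pow, mul_pow, mul_comm]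

end Nat

theorem Finset.one_sub_le_card_filter_div_card {α : Type*} {s : Finset α} (hs : s.Nonempty)
    (p : α → Prop) [DecidablePred p] {ε : ℝ} (h : (#{a ∈ s | ¬ p a} : ℝ) ≤ ε * #s) :
    1 - ε ≤ #{a ∈ s | p a} / #s := by
  have hsplit := card_filter_add_card_filter_not (s := s) p
  rw [le_div_iff₀ (by exact_mod_cast hs.card_pos)]
  rw [← hsplit] at h ⊢
  push_cast at h ⊢
  linarith

theorem Finset.card_filter_piFinset_le_mul_prod_erase {ι : Type*} [Fintype ι] [DecidableEq ι]
    {β : ι → Type*} [∀ i, DecidableEq (β i)] (t : ∀ i, Finset (β i)) (p : (∀ i, β i) → Prop)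
    [DecidablePred p] (j : ι) (K : ℕ)
    (hK : ∀ S ∈ Fintype.piFinset t, #{x ∈ t j | p (Function.update S j x)} ≤ K) :
    #{S ∈ Fintype.piFinset t | p S} ≤ K * ∏ i ∈ univ.erase j, #(t i) := by
  rw [← card_pi]
  -- fibres of the restriction to the coordinates `i ≠ j` are parametrised by the `j`-th coordinate
  refine card_le_mul_card_image_of_maps_to
    (f := fun (S : ∀ i, β i) i (_ : i ∈ univ.erase j) => S i) ?_ K ?_
  · intro S hS
    exact mem_pi.2 fun i _ => Fintype.mem_piFinset.1 (mem_filter.1 hS).1 i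
  intro b _
  rcases Finset.eq_empty_or_nonempty ({S ∈ Fintype.piFinset t | p S}.filter
      fun S => (fun i (_ : i ∈ univ.erase j) => S i) = b) with h | ⟨S₀, hS₀⟩
  · rw [h, card_empty]
    exact K.zero_le
  simp only [mem_filter] at hS₀
  refine (card_le_card fun S hS => ?_).trans
    ((card_image_le (f := Function.update S₀ j)).trans (hK S₀ hS₀.1.1))
  simp only [mem_filter] at hS
  have hupd : Function.update S₀ j (S j) = S := by
    funext i
    rcases eq_or_ne i j with rfl | hi
    · exact Function.update_self ..
    rw [Function.update_of_ne hi]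
    exact congrFun (congrFun (hS₀.2.trans hS.2.symm) i) (mem_erase.2 ⟨hi, mem_univ i⟩)
  refine mem_image.2 ⟨S j, mem_filter.2 ⟨Fintype.mem_piFinset.1 hS.1.1 j, ?_⟩, hupd⟩
  rw [hupd]
  exact hS.1.2

section Design

variable {ι α : Type*} [Fintype ι] [DecidableEq ι] [Fintype α]

-- reducible, so that its decidability instance is that of the unfolded formula
abbrev IsDisjunct (d : ℕ) (S : ι → Finset α) : Prop :=
  ∀ D : Finset ι, #D = d → ∀ j ∉ D, ∃ a ∈ S j, ∀ k ∈ D, a ∉ S k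

theorem filter_forall_card_eq_eq_piFinset (s : ℕ)
    [DecidablePred fun S : ι → Finset α => ∀ i, #(S i) = s] :
    (univ.filter fun S : ι → Finset α => ∀ i, #(S i) = s) =
      Fintype.piFinset fun _ => powersetCard s univ := by
  ext S
  simp [mem_powersetCard]

variable [DecidableEq α]

theorem card_filter_subset_biUnion_le {D : Finset ι} {j : ι} (hj : j ∉ D) (s : ℕ) :
    #{S ∈ Fintype.piFinset (fun _ : ι => powersetCard s (univ : Finset α)) | S j ⊆ D.biUnion S}
      ≤ (#D * s).choose s * (Fintype.card α).choose s ^ (Fintype.card ι - 1) := by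
  refine (card_filter_piFinset_le_mul_prod_erase _ _ j ((#D * s).choose s)
    fun S hS => ?_).trans_eq ?_
  · have hcover : ∀ x, D.biUnion (Function.update S j x) = D.biUnion S := fun x =>
      biUnion_congr rfl fun k hk => Function.update_of_ne (ne_of_mem_of_not_mem hk hj) _ _
    have hcard : #(D.biUnion S) ≤ #D * s := card_biUnion_le_card_mul D S s fun k _ =>
      (mem_powersetCard.1 (Fintype.mem_piFinset.1 hS k)).2.le
    calc #{x ∈ powersetCard s univ |
          Function.update S j x j ⊆ D.biUnion (Function.update S j x)}
        ≤ #(powersetCard s (D.biUnion S)) := card_le_card fun x hx => by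
          simp only [mem_filter, mem_powersetCard, Function.update_self, hcover] at hx ⊢
          exact ⟨hx.2, hx.1.2⟩
      _ ≤ (#D * s).choose s := by
          rw [card_powersetCard]
          exact Nat.choose_le_choose s hcard
  · simp [card_erase_of_mem]

theorem card_filter_not_isDisjunct_le (d s : ℕ)
    [DecidablePred (IsDisjunct (ι := ι) (α := α) d)] :
    #{S ∈ Fintype.piFinset (fun _ : ι => powersetCard s (univ : Finset α)) | ¬ IsDisjunct d S}
      ≤ (Fintype.card ι).choose d * (Fintype.card ι *
        ((d * s).choose s * (Fintype.card α).choose s ^ (Fintype.card ι - 1))) := by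
  set Ω := Fintype.piFinset (fun _ : ι => powersetCard s (univ : Finset α))
  have hcover : {S ∈ Ω | ¬ IsDisjunct d S} ⊆ (powersetCard d univ).biUnion fun D =>
      Dᶜ.biUnion fun j => {S ∈ Ω | S j ⊆ D.biUnion S} := by
    intro S hS
    obtain ⟨hSΩ, hS⟩ := mem_filter.1 hS
    simp only [IsDisjunct] at hS
    push Not at hS
    obtain ⟨D, hD, j, hj, hsub⟩ := hS
    simp only [mem_biUnion, mem_powersetCard, mem_compl, mem_filter]
    exact ⟨D, ⟨subset_univ D, hD⟩, j, hj, hSΩ, fun a ha => mem_biUnion.2 (hsub a ha)⟩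
  refine (card_le_card hcover).trans ?_
  rw [← card_univ, ← card_powersetCard]
  refine card_biUnion_le_card_mul _ _ _ fun D hD => ?_
  refine (card_biUnion_le_card_mul _ _ _ fun j hj => ?_).trans
    (Nat.mul_le_mul_right _ (card_le_univ _))
  rw [← (mem_powersetCard.1 hD).2]
  exact card_filter_subset_biUnion_le (mem_compl.1 hj) s

end Design

theorem sq_mul_choose_le_two_pow_of_logb_le {n d s : ℕ} (hn : 0 < n) (hd : 0 < d)
    (h : 2 * (d : ℝ) * logb 2 n + (d : ℝ) ^ 2 * logb 2 (exp 1 * n / d) ≤ (d * s : ℕ)) :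
    n ^ 2 * n.choose d ≤ 2 ^ s := by
  have hd' : (0 : ℝ) < d := by exact_mod_cast hd
  have hlog : logb 2 ((n : ℝ) ^ 2 * (exp 1 * n / d) ^ d) ≤ s := by
    rw [logb_mul (by positivity) (by positivity), logb_pow, logb_pow]
    push_cast at h
    refine le_of_mul_le_mul_left ?_ hd'
    linarith
  rw [logb_le_iff_le_rpow one_lt_two (by positivity), rpow_natCast] at hlog
  exact_mod_cast (mul_le_mul_of_nonneg_left (Nat.choose_le_exp_mul_div_pow n d)
    (by positivity)).trans hlog

theorem prob_disjunct_ge_general (n t d : ℕ) (hn : 2 ≤ n) (hd : 1 ≤ d)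
    (hdvd : d ∣ t)
    (htb : 2 * (d : ℝ) * Real.logb 2 n
        + (d : ℝ) ^ 2 * Real.logb 2 (Real.exp 1 * n / d) ≤ t) :
    1 - 1 / (n : ℝ) ≤
      (((Finset.univ.filter
            (fun S : Fin n → Finset (Fin (2 * t)) => ∀ i, (S i).card = t / d)).filter
          (fun S => ∀ D : Finset (Fin n), D.card = d →
            ∀ j ∉ D, ∃ a ∈ S j, ∀ k ∈ D, a ∉ S k)).card : ℝ) /
        ((Finset.univ.filter
            (fun S : Fin n → Finset (Fin (2 * t)) => ∀ i, (S i).card = t / d)).card : ℝ) := by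
  obtain ⟨s, rfl⟩ := hdvd
  rw [Nat.mul_div_cancel_left s hd, filter_forall_card_eq_eq_piFinset]
  have hbad := card_filter_not_isDisjunct_le (ι := Fin n) (α := Fin (2 * (d * s))) d s
  simp only [Fintype.card_fin] at hbad
  set Ω := Fintype.piFinset fun _ : Fin n => powersetCard s (univ : Finset (Fin (2 * (d * s))))
  set C := (2 * (d * s)).choose s
  have hΩ : #Ω = C ^ n := by simp [Ω, C]
  have hne : Ω.Nonempty :=
    Fintype.piFinset_nonempty.2 fun _ => powersetCard_nonempty.2 (by simp; nlinarith)
  have hkey := sq_mul_choose_le_two_pow_of_logb_le (by omega) hd htb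
  have hdouble := Nat.pow_mul_choose_le 2 (d * s) s
  have hcount : n * #{S ∈ Ω | ¬ IsDisjunct d S} ≤ C ^ n :=
    calc _ ≤ n * (n.choose d * (n * ((d * s).choose s * C ^ (n - 1)))) :=
          Nat.mul_le_mul_left n hbad
      _ = n ^ 2 * n.choose d * (d * s).choose s * C ^ (n - 1) := by ring
      _ ≤ 2 ^ s * (d * s).choose s * C ^ (n - 1) := by gcongr
      _ ≤ C * C ^ (n - 1) := by gcongr
      _ = C ^ n := by rw [← pow_succ', Nat.sub_add_cancel (by omega)]
  refine one_sub_le_card_filter_div_card hne _ ?_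
  rw [hΩ, one_div, inv_mul_eq_div, le_div_iff₀ (by positivity), mul_comm]
  exact_mod_cast hcount

/-- Let `n ≥ 2`, `1 ≤ d ≤ n`, and `t` a positive multiple of `d`
with `t ≥ 2·d·log₂ n + d²·log₂(e·n/d)`.  The random design on `n` items with
`2t` tests and column-sparsity `t/d` is `d`-disjunct (i.e., `D`-distinguishing
for every `D ⊆ Fin n` with `|D| = d`) with probability at least `1 - 1/n`. -/
theorem prob_disjunct_ge (n t d : ℕ) (hn : 2 ≤ n) (hd : 1 ≤ d) (hdn : d ≤ n)
    (ht : 0 < t) (hdvd : d ∣ t)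
    (htb : 2 * (d : ℝ) * Real.logb 2 n
        + (d : ℝ) ^ 2 * Real.logb 2 (Real.exp 1 * n / d) ≤ t) :
    1 - 1 / (n : ℝ) ≤
      (((Finset.univ.filter
            (fun S : Fin n → Finset (Fin (2 * t)) => ∀ i, (S i).card = t / d)).filter
          (fun S => ∀ D : Finset (Fin n), D.card = d →
            ∀ j ∉ D, ∃ a ∈ S j, ∀ k ∈ D, a ∉ S k)).card : ℝ) /
        ((Finset.univ.filter
            (fun S : Fin n → Finset (Fin (2 * t)) => ∀ i, (S i).card = t / d)).card : ℝ) :=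
  prob_disjunct_ge_general n t d hn hd hdvd htb
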